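/- Let p/q and p'/q' be rationals (q, q' positive integers), ω = (α, α', 1) with α, α' irrational, and let a_q, b_{q'} be positive reals satisfying e^{−q} ≥ a_q ≥ 4|qα − p| and e^{−q'} ≥ b_{q'} ≥ 4|q'α' − p'|. Define H(θ,r) = ⟨r,ω⟩ − a_q cos 2π(qθ₁ − pθ₃) − b_{q'} cos 2π(q'θ₂ − p'θ₃). Then: (a) for each t ∈ [a_q^{−1}, 1/(4|qα − p|)], the time-t map Φ^t_H is (1, 1/q, 2q)-stretching; (b) for each t ∈ [b_{q'}^{−1}, 1/(4|q'α' − p'|)], the time-t map Φ^t_H is (2, 1/q', 2q')-stretching. -/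

import Mathlib

/-!
Since `H` is linear in `r`, the angles move linearly, `θ(t) = θ + tω`, so the phase
`φ = qθ₁ - pθ₃` drifts at the small rate `ε = qα - p`. Integrating
`ṙ₁ = -2πqa sin 2π(qθ₁ - pθ₃)` along this line gives
`r₁(t) = r₁ + (qa/ε)(cos 2π(φ + εt) - cos 2πφ)`, which depends on `θ` only through `φ`.
As `θ₁` runs over an interval of length `1/q`, `φ` runs over a full period, so `r₁(t)` sweeps
the interval of radius `2qa|sin πεt|/|ε|` around `r₁`; by Jordan's inequality and `|ε|t ≤ 1/4`
this radius is at least `4qat ≥ 4q`. The energy condition defining `J⁽¹⁾` is met by adjusting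
`r₃`. Part (b) is the same argument with the two modes exchanged.
-/

open Real Set

noncomputable section

/-- Phase space (the universal cover of 𝕋³ × ℝ³). -/
abbrev PS3 : Type := (Fin 3 → ℝ) × (Fin 3 → ℝ)

/-- `Φ` is the flow of the Hamiltonian ODE θ̇ = ∂H/∂r, ṙ = −∂H/∂θ. -/
def IsHamFlow (H : PS3 → ℝ) (Φ : ℝ → PS3 → PS3) : Prop :=
  (∀ x, Φ 0 x = x) ∧
  (∀ (x : PS3) (t : ℝ) (j : Fin 3),
    HasDerivAt (fun s : ℝ => (Φ s x).1 j)
      (deriv (fun y : ℝ => H ((Φ t x).1, Function.update (Φ t x).2 j y)) ((Φ t x).2 j)) t) ∧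
  (∀ (x : PS3) (t : ℝ) (j : Fin 3),
    HasDerivAt (fun s : ℝ => (Φ s x).2 j)
      (-deriv (fun y : ℝ => H (Function.update (Φ t x).1 j y, (Φ t x).2)) ((Φ t x).1 j)) t)

/-- The interval J⁽¹⁾(s₀, l) in the energy surface {H = H(s₀)}. -/
def J1 (H : PS3 → ℝ) (s₀ : PS3) (l : ℝ) : Set PS3 :=
  {x | (∃ s ∈ Icc (0 : ℝ) l, x.1 0 = s₀.1 0 + s) ∧ x.1 1 = s₀.1 1 ∧ x.1 2 = s₀.1 2 ∧
       x.2 0 = s₀.2 0 ∧ x.2 1 = s₀.2 1 ∧ H x = H s₀}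

/-- The interval J⁽²⁾(s₀, l) in the energy surface {H = H(s₀)}. -/
def J2 (H : PS3 → ℝ) (s₀ : PS3) (l : ℝ) : Set PS3 :=
  {x | x.1 0 = s₀.1 0 ∧ (∃ s ∈ Icc (0 : ℝ) l, x.1 1 = s₀.1 1 + s) ∧ x.1 2 = s₀.1 2 ∧
       x.2 0 = s₀.2 0 ∧ x.2 1 = s₀.2 1 ∧ H x = H s₀}

/-- Φ^t is (1, l, L)-stretching. -/
def Stretching1 (H : PS3 → ℝ) (Φ : ℝ → PS3 → PS3) (t l L : ℝ) : Prop :=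
  (∀ s₀ : PS3, ‖s₀.2‖ ≤ L / 10 →
    Icc (-L) L ⊆ (fun x => (Φ t x).2 0) '' J1 H s₀ l) ∧
  (∀ x y : PS3, x.1 0 = y.1 0 → x.1 2 = y.1 2 → x.2 = y.2 →
    (Φ t x).2 0 = (Φ t y).2 0)

/-- Φ^t is (2, l, L)-stretching. -/
def Stretching2 (H : PS3 → ℝ) (Φ : ℝ → PS3 → PS3) (t l L : ℝ) : Prop :=
  (∀ s₀ : PS3, ‖s₀.2‖ ≤ L / 10 →
    Icc (-L) L ⊆ (fun x => (Φ t x).2 1) '' J2 H s₀ l) ∧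
  (∀ x y : PS3, x.1 1 = y.1 1 → x.1 2 = y.1 2 → x.2 = y.2 →
    (Φ t x).2 1 = (Φ t y).2 1)

open Function

lemma dotProduct_update {n R : Type*} [Fintype n] [DecidableEq n] [CommRing R]
    (v w : n → R) (j : n) (y : R) : update v j y ⬝ᵥ w = v ⬝ᵥ w + (y - v j) * w j := by
  have hupdate : update v j y = v + Pi.single j (y - v j) := by
    ext i
    rcases eq_or_ne i j with rfl | h <;> simp [*]
  rw [hupdate, add_dotProduct, single_dotProduct]

lemma eq_of_forall_hasDerivAt_eq {E : Type*} [NormedAddCommGroup E] [NormedSpace ℝ E]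
    {f g f' : ℝ → E} (hf : ∀ t, HasDerivAt f (f' t) t) (hg : ∀ t, HasDerivAt g (f' t) t)
    (h₀ : f 0 = g 0) (t : ℝ) : f t = g t := by
  have hderiv : ∀ s, HasDerivAt (f - g) 0 s := fun s => by simpa using (hf s).sub (hg s)
  have hconst := is_const_of_deriv_eq_zero (fun s => (hderiv s).differentiableAt)
    (fun s => (hderiv s).deriv) t 0
  rwa [Pi.sub_apply, Pi.sub_apply, h₀, sub_self, sub_eq_zero] at hconst

lemma two_mul_abs_le_abs_sin_pi_mul {x : ℝ} (hx : |x| ≤ 1 / 2) : 2 * |x| ≤ |sin (π * x)| := by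
  have hjordan := mul_abs_le_abs_sin (x := π * x)
    (by rw [abs_mul, abs_of_pos pi_pos]; nlinarith [pi_pos])
  rwa [abs_mul, abs_of_pos pi_pos, ← mul_assoc, div_mul_cancel₀ _ pi_ne_zero] at hjordan

lemma exists_mem_Ico_cos_sub_cos_eq (δ c₀ y : ℝ) (hy : |y| ≤ 2 * |sin (π * δ)|) :
    ∃ c ∈ Ico c₀ (c₀ + 1), cos (2 * π * (c + δ)) - cos (2 * π * c) = y := by
  have hperiodic : Periodic (fun c => cos (2 * π * (c + δ)) - cos (2 * π * c)) 1 := fun c => by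
    simp only [show 2 * π * (c + 1 + δ) = 2 * π * (c + δ) + 2 * π by ring, mul_add, mul_one,
      cos_add_two_pi]
  suffices ∃ c, cos (2 * π * (c + δ)) - cos (2 * π * c) = y by
    obtain ⟨c, hc⟩ := this
    obtain ⟨c', hc', hcc'⟩ := hperiodic.exists_mem_Ico one_pos c c₀
    exact ⟨c', hc', hcc' ▸ hc⟩
  have hprod : ∀ c, cos (2 * π * (c + δ)) - cos (2 * π * c)
      = -2 * sin (π * δ) * sin (2 * π * c + π * δ) := fun c => by
    rw [cos_sub_cos]; ring_nf
  rcases eq_or_ne (sin (π * δ)) 0 with hsin | hsin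
  · refine ⟨0, ?_⟩
    rw [hsin, abs_zero, mul_zero, abs_nonpos_iff] at hy
    rw [hprod, hsin, hy]; ring
  · set w := -y / (2 * sin (π * δ))
    have hw : |w| ≤ 1 := by
      rw [abs_div, abs_neg, abs_mul, abs_two, div_le_one (by positivity)]; exact hy
    refine ⟨(arcsin w - π * δ) / (2 * π), ?_⟩
    rw [hprod, show 2 * π * ((arcsin w - π * δ) / (2 * π)) + π * δ = arcsin w by
      field_simp; ring, sin_arcsin (abs_le.mp hw).1 (abs_le.mp hw).2]
    simp only [w]
    field_simp

lemma exists_mem_Icc_add_mul_cos_sub_cos_eq {Q a ε t r z : ℝ} (c₀ : ℝ) (hQ : 0 < Q)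
    (hε : ε ≠ 0) (ha : 4 * |ε| ≤ a) (ht : t ∈ Icc a⁻¹ (1 / (4 * |ε|)))
    (hz : |z - r| ≤ 4 * Q) :
    ∃ s ∈ Icc 0 (1 / Q),
      r + a * Q / ε * (cos (2 * π * (c₀ + s * Q + ε * t)) - cos (2 * π * (c₀ + s * Q))) = z := by
  have hεpos : 0 < |ε| := abs_pos.mpr hε
  have hapos : 0 < a := by linarith
  have hat : 1 ≤ a * t := by simpa [hapos.ne'] using mul_le_mul_of_nonneg_left ht.1 hapos.le
  have hεt : |ε * t| ≤ 1 / 4 := by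
    have ht₀ : 0 ≤ t := (inv_pos.mpr hapos).le.trans ht.1
    rw [abs_mul, abs_of_nonneg ht₀]
    calc |ε| * t ≤ |ε| * (1 / (4 * |ε|)) := mul_le_mul_of_nonneg_left ht.2 hεpos.le
      _ = 1 / 4 := by field_simp
  set y := (z - r) * ε / (a * Q)
  have hy : |y| ≤ 2 * |sin (π * (ε * t))| := by
    calc |y| = |z - r| * |ε| / (a * Q) := by
          rw [abs_div, abs_mul, abs_of_pos (by positivity : 0 < a * Q)]
      _ ≤ 4 * Q * |ε| / (a * Q) := by gcongr
      _ = 4 * |ε| / a := by field_simp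
      _ ≤ 4 * |ε| * t := by rw [div_le_iff₀ hapos]; nlinarith
      _ = 2 * (2 * |ε * t|) := by
          rw [abs_mul, abs_of_nonneg ((inv_pos.mpr hapos).le.trans ht.1)]; ring
      _ ≤ 2 * |sin (π * (ε * t))| := by
          gcongr; exact two_mul_abs_le_abs_sin_pi_mul (by linarith)
  obtain ⟨c, hc, hcy⟩ := exists_mem_Ico_cos_sub_cos_eq (ε * t) c₀ y hy
  refine ⟨(c - c₀) / Q, ⟨div_nonneg (sub_nonneg.mpr hc.1) hQ.le, ?_⟩, ?_⟩
  · rw [div_le_div_iff_of_pos_right hQ]; linarith [hc.2]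
  · rw [div_mul_cancel₀ _ hQ.ne', add_sub_cancel, hcy]
    simp only [y]
    field_simp
    ring

section LinearInMomenta

variable {H : PS3 → ℝ} {Φ : ℝ → PS3 → PS3} {ω : Fin 3 → ℝ} {V : (Fin 3 → ℝ) → ℝ}

lemma IsHamFlow.fst_eq (hH : ∀ x, H x = x.2 ⬝ᵥ ω - V x.1) (hΦ : IsHamFlow H Φ)
    (x : PS3) (t : ℝ) : (Φ t x).1 = x.1 + t • ω := by
  ext j
  have hderiv : ∀ s, HasDerivAt (fun s => (Φ s x).1 j) (ω j) s := fun s => by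
    have h := hΦ.2.1 x s j
    simp only [hH, dotProduct_update] at h
    have hlin : HasDerivAt (fun y => (Φ s x).2 ⬝ᵥ ω + (y - (Φ s x).2 j) * ω j - V (Φ s x).1)
        (ω j) ((Φ s x).2 j) := by
      simpa using ((((hasDerivAt_id ((Φ s x).2 j)).sub_const ((Φ s x).2 j)).mul_const
        (ω j)).const_add ((Φ s x).2 ⬝ᵥ ω)).sub_const (V (Φ s x).1)
    rwa [hlin.deriv] at h
  have hline : ∀ s, HasDerivAt (fun s => x.1 j + s * ω j) (ω j) s := fun s => by
    simpa using ((hasDerivAt_id s).mul_const (ω j)).const_add (x.1 j)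
  simpa [mul_comm] using eq_of_forall_hasDerivAt_eq hderiv hline (by simp [hΦ.1]) t

lemma IsHamFlow.hasDerivAt_snd (hH : ∀ x, H x = x.2 ⬝ᵥ ω - V x.1) (hΦ : IsHamFlow H Φ)
    (x : PS3) (j : Fin 3) (t : ℝ) :
    HasDerivAt (fun s => (Φ s x).2 j)
      (deriv (fun y => V (update (Φ t x).1 j y)) ((Φ t x).1 j)) t := by
  simpa only [hH, deriv_const_sub, neg_neg] using hΦ.2.2 x t j

lemma exists_update_snd_eq (hH : ∀ x, H x = x.2 ⬝ᵥ ω - V x.1) {i : Fin 3} (hω : ω i ≠ 0)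
    (θ : Fin 3 → ℝ) (x : PS3) : ∃ ρ, H (θ, update x.2 i ρ) = H x :=
  ⟨x.2 i + (V θ - V x.1) / ω i, by rw [hH, hH, dotProduct_update]; field_simp; ring⟩

end LinearInMomenta

def twoModePotential (a b : ℝ) (k k' θ : Fin 3 → ℝ) : ℝ :=
  a * cos (2 * π * (θ ⬝ᵥ k)) + b * cos (2 * π * (θ ⬝ᵥ k'))

section TwoModes

variable {a b : ℝ} {k k' : Fin 3 → ℝ}

lemma twoModePotential_comm : twoModePotential a b k k' = twoModePotential b a k' k :=
  funext fun _ => add_comm _ _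

lemma hasDerivAt_twoModePotential_update {j : Fin 3} (hk' : k' j = 0) (θ : Fin 3 → ℝ) :
    HasDerivAt (fun y => twoModePotential a b k k' (update θ j y))
      (-(2 * π * a * k j) * sin (2 * π * (θ ⬝ᵥ k))) (θ j) := by
  simp only [twoModePotential, dotProduct_update, hk', mul_zero, add_zero]
  have hphase : HasDerivAt (fun y => 2 * π * (θ ⬝ᵥ k + (y - θ j) * k j)) (2 * π * k j) (θ j) := by
    simpa using ((((hasDerivAt_id (θ j)).sub_const (θ j)).mul_const (k j)).const_add
      (θ ⬝ᵥ k)).const_mul (2 * π)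
  refine ((hphase.cos.const_mul a).add_const (b * cos (2 * π * (θ ⬝ᵥ k')))).congr_deriv ?_
  rw [sub_self, zero_mul, add_zero]
  ring

variable {H : PS3 → ℝ} {Φ : ℝ → PS3 → PS3} {ω : Fin 3 → ℝ}

lemma IsHamFlow.snd_eq_of_twoMode (hH : ∀ x, H x = x.2 ⬝ᵥ ω - twoModePotential a b k k' x.1)
    (hΦ : IsHamFlow H Φ) {j : Fin 3} (hk' : k' j = 0) (hε : ω ⬝ᵥ k ≠ 0) (x : PS3) (t : ℝ) :
    (Φ t x).2 j = x.2 j + a * k j / (ω ⬝ᵥ k) *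
      (cos (2 * π * (x.1 ⬝ᵥ k + (ω ⬝ᵥ k) * t)) - cos (2 * π * (x.1 ⬝ᵥ k))) := by
  have hphase : ∀ s, (Φ s x).1 ⬝ᵥ k = x.1 ⬝ᵥ k + (ω ⬝ᵥ k) * s := fun s => by
    rw [hΦ.fst_eq hH, add_dotProduct, smul_dotProduct, smul_eq_mul, mul_comm]
  have hphase' : ∀ s, HasDerivAt (fun s => 2 * π * (x.1 ⬝ᵥ k + (ω ⬝ᵥ k) * s))
      (2 * π * (ω ⬝ᵥ k)) s := fun s => by
    simpa using (((hasDerivAt_id s).const_mul (ω ⬝ᵥ k)).const_add (x.1 ⬝ᵥ k)).const_mul (2 * π)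
  have hlhs : ∀ s, HasDerivAt (fun s => (Φ s x).2 j)
      (-(2 * π * a * k j) * sin (2 * π * (x.1 ⬝ᵥ k + (ω ⬝ᵥ k) * s))) s := fun s => by
    have h := hΦ.hasDerivAt_snd hH x j s
    rwa [(hasDerivAt_twoModePotential_update hk' _).deriv, hphase] at h
  have hrhs : ∀ s, HasDerivAt (fun s => x.2 j + a * k j / (ω ⬝ᵥ k) *
      (cos (2 * π * (x.1 ⬝ᵥ k + (ω ⬝ᵥ k) * s)) - cos (2 * π * (x.1 ⬝ᵥ k))))
      (-(2 * π * a * k j) * sin (2 * π * (x.1 ⬝ᵥ k + (ω ⬝ᵥ k) * s))) s := fun s => by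
    refine (((hphase' s).cos.sub_const _).const_mul _).const_add _ |>.congr_deriv ?_
    field_simp
  exact eq_of_forall_hasDerivAt_eq hlhs hrhs (by simp [hΦ.1 x]) t

end TwoModes

section Stretching

variable {H : PS3 → ℝ} {Φ : ℝ → PS3 → PS3} {ω k k' : Fin 3 → ℝ} {a b Q t : ℝ}

lemma exists_update_flow_snd_eq
    (hH : ∀ x, H x = x.2 ⬝ᵥ ω - twoModePotential a b k k' x.1) (hΦ : IsHamFlow H Φ)
    (hω : ω 2 ≠ 0) {j : Fin 3} (hj : j ≠ 2) (hk : k j = Q) (hk' : k' j = 0) (hQ : 0 < Q)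
    (hε : ω ⬝ᵥ k ≠ 0) (ha : 4 * |ω ⬝ᵥ k| ≤ a) (ht : t ∈ Icc a⁻¹ (1 / (4 * |ω ⬝ᵥ k|)))
    (x : PS3) {z : ℝ} (hz : |z - x.2 j| ≤ 4 * Q) :
    ∃ s ∈ Icc 0 (1 / Q), ∃ ρ, H (update x.1 j (x.1 j + s), update x.2 2 ρ) = H x ∧
      (Φ t (update x.1 j (x.1 j + s), update x.2 2 ρ)).2 j = z := by
  obtain ⟨s, hs, hsz⟩ := exists_mem_Icc_add_mul_cos_sub_cos_eq (x.1 ⬝ᵥ k) hQ hε ha ht hz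
  obtain ⟨ρ, hρ⟩ := exists_update_snd_eq hH hω (update x.1 j (x.1 j + s)) x
  refine ⟨s, hs, ρ, hρ, ?_⟩
  rw [hΦ.snd_eq_of_twoMode hH hk' hε]
  dsimp only
  rwa [update_of_ne hj, dotProduct_update, add_sub_cancel_left, hk]

lemma abs_sub_apply_le_of_norm_le {L z : ℝ} (hz : z ∈ Icc (-L) L) {r : Fin 3 → ℝ}
    (hr : ‖r‖ ≤ L / 10) (i : Fin 3) : |z - r i| ≤ 2 * L := by
  have hri : |r i| ≤ L / 10 := (norm_le_pi_norm r i).trans hr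
  have hzL : |z| ≤ L := abs_le.mpr hz
  linarith [abs_sub z (r i), abs_nonneg z]

lemma stretching1_of_twoMode
    (hH : ∀ x, H x = x.2 ⬝ᵥ ω - twoModePotential a b k k' x.1) (hΦ : IsHamFlow H Φ)
    (hω : ω 2 ≠ 0) (hk₀ : k 0 = Q) (hk₁ : k 1 = 0) (hk' : k' 0 = 0) (hQ : 0 < Q)
    (hε : ω ⬝ᵥ k ≠ 0) (ha : 4 * |ω ⬝ᵥ k| ≤ a) (ht : t ∈ Icc a⁻¹ (1 / (4 * |ω ⬝ᵥ k|))) :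
    Stretching1 H Φ t (1 / Q) (2 * Q) := by
  refine ⟨fun x hx z hz => ?_, fun x y h₀ h₂ hr => ?_⟩
  · obtain ⟨s, hs, ρ, hρ, hΦz⟩ := exists_update_flow_snd_eq hH hΦ hω (by decide) hk₀ hk' hQ
      hε ha ht x (by linarith [abs_sub_apply_le_of_norm_le hz hx 0])
    exact ⟨_, ⟨⟨s, hs, by simp⟩, by simp, by simp, by simp, by simp, hρ⟩, hΦz⟩
  · have hphase : x.1 ⬝ᵥ k = y.1 ⬝ᵥ k := by simp [dotProduct, Fin.sum_univ_three, h₀, h₂, hk₁]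
    rw [hΦ.snd_eq_of_twoMode hH hk' hε, hΦ.snd_eq_of_twoMode hH hk' hε, hphase, hr]

lemma stretching2_of_twoMode
    (hH : ∀ x, H x = x.2 ⬝ᵥ ω - twoModePotential a b k k' x.1) (hΦ : IsHamFlow H Φ)
    (hω : ω 2 ≠ 0) (hk₀ : k 0 = 0) (hk₁ : k 1 = Q) (hk' : k' 1 = 0) (hQ : 0 < Q)
    (hε : ω ⬝ᵥ k ≠ 0) (ha : 4 * |ω ⬝ᵥ k| ≤ a) (ht : t ∈ Icc a⁻¹ (1 / (4 * |ω ⬝ᵥ k|))) :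
    Stretching2 H Φ t (1 / Q) (2 * Q) := by
  refine ⟨fun x hx z hz => ?_, fun x y h₁ h₂ hr => ?_⟩
  · obtain ⟨s, hs, ρ, hρ, hΦz⟩ := exists_update_flow_snd_eq hH hΦ hω (by decide) hk₁ hk' hQ
      hε ha ht x (by linarith [abs_sub_apply_le_of_norm_le hz hx 1])
    exact ⟨_, ⟨by simp, ⟨s, hs, by simp⟩, by simp, by simp, by simp, hρ⟩, hΦz⟩
  · have hphase : x.1 ⬝ᵥ k = y.1 ⬝ᵥ k := by simp [dotProduct, Fin.sum_univ_three, h₁, h₂, hk₀]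
    rw [hΦ.snd_eq_of_twoMode hH hk' hε, hΦ.snd_eq_of_twoMode hH hk' hε, hphase, hr]

end Stretching

theorem stretching_model_lemma (α α' : ℝ) (hα : Irrational α) (hα' : Irrational α')
    (p p' : ℤ) (q q' : ℕ) (hq : 0 < q) (hq' : 0 < q')
    (a b : ℝ)
    (ha : 4 * |(q : ℝ) * α - (p : ℝ)| ≤ a ∧ a ≤ Real.exp (-(q : ℝ)))
    (hb : 4 * |(q' : ℝ) * α' - (p' : ℝ)| ≤ b ∧ b ≤ Real.exp (-(q' : ℝ)))
    (H : PS3 → ℝ)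
    (hH : H = fun x : PS3 =>
      (∑ j, x.2 j * (![α, α', 1] : Fin 3 → ℝ) j)
        - a * Real.cos (2 * π * ((q : ℝ) * x.1 0 - (p : ℝ) * x.1 2))
        - b * Real.cos (2 * π * ((q' : ℝ) * x.1 1 - (p' : ℝ) * x.1 2)))
    (Φ : ℝ → PS3 → PS3) (hΦ : IsHamFlow H Φ) :
    (∀ t ∈ Icc a⁻¹ (1 / (4 * |(q : ℝ) * α - (p : ℝ)|)),
      Stretching1 H Φ t (1 / (q : ℝ)) (2 * (q : ℝ))) ∧
    (∀ t ∈ Icc b⁻¹ (1 / (4 * |(q' : ℝ) * α' - (p' : ℝ)|)),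
      Stretching2 H Φ t (1 / (q' : ℝ)) (2 * (q' : ℝ))) := by
  set ω : Fin 3 → ℝ := ![α, α', 1]
  set k : Fin 3 → ℝ := ![(q : ℝ), 0, -(p : ℝ)]
  set k' : Fin 3 → ℝ := ![0, (q' : ℝ), -(p' : ℝ)]
  have hH₁ : ∀ x, H x = x.2 ⬝ᵥ ω - twoModePotential a b k k' x.1 := fun x => by
    simp [hH, twoModePotential, dotProduct, Fin.sum_univ_three, ω, k, k']
    ring_nf
  have hH₂ : ∀ x, H x = x.2 ⬝ᵥ ω - twoModePotential b a k' k x.1 := by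
    rwa [← twoModePotential_comm]
  have hε : ω ⬝ᵥ k = q * α - p := by simp [ω, k, dotProduct, Fin.sum_univ_three]; ring
  have hε' : ω ⬝ᵥ k' = q' * α' - p' := by simp [ω, k', dotProduct, Fin.sum_univ_three]; ring
  have hne : ω ⬝ᵥ k ≠ 0 := hε ▸ ((hα.natCast_mul hq.ne').sub_intCast p).ne_zero
  have hne' : ω ⬝ᵥ k' ≠ 0 := hε' ▸ ((hα'.natCast_mul hq'.ne').sub_intCast p').ne_zero
  refine ⟨fun t ht => ?_, fun t ht => ?_⟩
  · exact stretching1_of_twoMode hH₁ hΦ (by simp [ω]) (by simp [k]) (by simp [k]) (by simp [k'])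
      (Nat.cast_pos.mpr hq) hne (hε ▸ ha.1) (hε ▸ ht)
  · exact stretching2_of_twoMode hH₂ hΦ (by simp [ω]) (by simp [k']) (by simp [k']) (by simp [k])
      (Nat.cast_pos.mpr hq') hne' (hε' ▸ hb.1) (hε' ▸ ht)
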